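/- arXiv:1902.02479 — 5 statements merged into one kernel-verified Lean document; each statement's English description precedes it below -/
import Mathlib

section
/- Let H1, H2 be Hilbert spaces, V : H1 → H2 a bounded operator, and D1, D2 self-adjoint operators on H1, H2 respectively. If the map k ↦ e^{ikD2} V e^{-ikD1} from ℝ to bounded operators is differentiable at 0 in the operator norm topology with derivative iW, then V maps the domain of D1 into the domain of D2, and for every ξ in dom(D1) we have D2(Vξ) = Wξ + V(D1ξ); in particular D2V − VD1 extends to a bounded operator on H1. -/
/-! The orbit `k ↦ G₂ k (V ξ)` factors as `(G₂ k ∘ V ∘ G₁ (-k)) (G₁ k ξ)`: a norm-differentiable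
operator path applied to a differentiable vector path. The product rule makes it differentiable
at `0` with derivative `i W ξ + V (i D₁ ξ)`, so `V ξ` lies in the domain of the generator `D₂`,
and uniqueness of derivatives identifies `i D₂ (V ξ)` with that derivative. -/

theorem HasDerivAt.clm_apply_of_restrictScalars {𝕜 𝕜' E F : Type*} [NontriviallyNormedField 𝕜]
    [NontriviallyNormedField 𝕜'] [NormedAlgebra 𝕜 𝕜'] [NormedAddCommGroup E] [NormedSpace 𝕜' E]
    [NormedSpace 𝕜 E] [IsScalarTower 𝕜 𝕜' E] [NormedAddCommGroup F] [NormedSpace 𝕜' F]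
    [NormedSpace 𝕜 F] [IsScalarTower 𝕜 𝕜' F] {A : 𝕜 → E →L[𝕜'] F} {A' : E →L[𝕜'] F}
    {u : 𝕜 → E} {u' : E} {t : 𝕜} (hA : HasDerivAt A A' t) (hu : HasDerivAt u u' t) :
    HasDerivAt (fun s => A s (u s)) (A' (u t) + A t u') t := by
  let R := ContinuousLinearMap.restrictScalarsL 𝕜' E F 𝕜 𝕜
  exact (R.hasFDerivAt.comp_hasDerivAt t hA).clm_apply hu

theorem hasDerivAt_orbit_apply_of_hasDerivAt_conj {𝕜 E F : Type*} [NontriviallyNormedField 𝕜]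
    [NormedAlgebra ℝ 𝕜] [NormedAddCommGroup E] [NormedSpace 𝕜 E] [NormedSpace ℝ E]
    [IsScalarTower ℝ 𝕜 E] [NormedAddCommGroup F] [NormedSpace 𝕜 F] [NormedSpace ℝ F]
    [IsScalarTower ℝ 𝕜 F] (V : E →L[𝕜] F) (G1 : ℝ → E →L[𝕜] E) (G2 : ℝ → F →L[𝕜] F)
    (hG1grp : ∀ s t : ℝ, G1 (s + t) = (G1 s).comp (G1 t)) (hG1zero : G1 0 = 1)
    (hG2zero : G2 0 = 1) {W' : E →L[𝕜] F} {x u' : E}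
    (hW : HasDerivAt (fun k : ℝ => (G2 k).comp (V.comp (G1 (-k)))) W' 0)
    (hx : HasDerivAt (fun k : ℝ => G1 k x) u' 0) :
    HasDerivAt (fun k : ℝ => G2 k (V x)) (W' x + V u') 0 := by
  have hcancel : ∀ k : ℝ, G1 (-k) (G1 k x) = x := fun k => by
    rw [← ContinuousLinearMap.comp_apply, ← hG1grp, neg_add_cancel, hG1zero,
      one_apply_eq_self]
  simpa only [ContinuousLinearMap.comp_apply, hcancel, neg_zero, hG1zero, hG2zero,
    one_apply_eq_self] using hW.clm_apply_of_restrictScalars hx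

theorem commutator_bounded_of_differentiable_general
    {H1 H2 : Type*} [NormedAddCommGroup H1] [InnerProductSpace ℂ H1]
    [NormedAddCommGroup H2] [InnerProductSpace ℂ H2]
    (V : H1 →L[ℂ] H2)
    (D1 : H1 →ₗ.[ℂ] H1) (D2 : H2 →ₗ.[ℂ] H2)
    (G1 : ℝ → (H1 →L[ℂ] H1)) (G2 : ℝ → (H2 →L[ℂ] H2))
    (hG1grp : ∀ s t : ℝ, G1 (s + t) = (G1 s).comp (G1 t)) (hG1zero : G1 0 = 1)
    (hG2zero : G2 0 = 1)
    -- `D₁` is the generator of `G₁`: membership in the domain is equivalent to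
    -- differentiability of the orbit, and the derivative is `i • D₁ x`.
    (hD1der : ∀ x : D1.domain,
      HasDerivAt (fun k : ℝ => G1 k (x : H1)) (Complex.I • D1 x) 0)
    (hD2gen : ∀ x : H2, x ∈ D2.domain ↔ ∃ y : H2, HasDerivAt (fun k : ℝ => G2 k x) y 0)
    (hD2der : ∀ x : D2.domain,
      HasDerivAt (fun k : ℝ => G2 k (x : H2)) (Complex.I • D2 x) 0)
    (W : H1 →L[ℂ] H2)
    (hW : HasDerivAt (fun k : ℝ => (G2 k).comp (V.comp (G1 (-k)))) (Complex.I • W) 0) :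
    ∀ x : D1.domain, ∃ h : V (x : H1) ∈ D2.domain,
      D2 ⟨V (x : H1), h⟩ = W (x : H1) + V (D1 x) := by
  intro x
  have horbit : HasDerivAt (fun k : ℝ => G2 k (V (x : H1)))
      (Complex.I • (W (x : H1) + V (D1 x))) 0 := by
    simpa only [smul_apply, map_smul, smul_add] using
      hasDerivAt_orbit_apply_of_hasDerivAt_conj V G1 G2 hG1grp hG1zero hG2zero hW (hD1der x)
  have hmem : V (x : H1) ∈ D2.domain := (hD2gen _).mpr ⟨_, horbit⟩
  refine ⟨hmem, smul_right_injective H2 Complex.I_ne_zero ?_⟩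
  exact (hD2der ⟨V (x : H1), hmem⟩).unique horbit

/-- If `k ↦ e^{ikD₂} V e^{-ikD₁}` is differentiable at `0` in operator norm
with derivative `i • W`, then `V` maps `dom D₁` into `dom D₂` and
`D₂ (V ξ) = W ξ + V (D₁ ξ)` for all `ξ ∈ dom D₁` (so `D₂V - VD₁` has bounded extension `W`).
The self-adjoint operators `D₁, D₂` are given through their strongly continuous unitary
groups `G₁, G₂`, of which they are the generators in the sense of Stone's theorem. -/
theorem commutator_bounded_of_differentiable
    {H1 H2 : Type*} [NormedAddCommGroup H1] [InnerProductSpace ℂ H1] [CompleteSpace H1]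
    [NormedAddCommGroup H2] [InnerProductSpace ℂ H2] [CompleteSpace H2]
    (V : H1 →L[ℂ] H2)
    (D1 : H1 →ₗ.[ℂ] H1) (D2 : H2 →ₗ.[ℂ] H2)
    (hD1 : IsSelfAdjoint D1) (hD2 : IsSelfAdjoint D2)
    (G1 : ℝ → (H1 →L[ℂ] H1)) (G2 : ℝ → (H2 →L[ℂ] H2))
    (hG1grp : ∀ s t : ℝ, G1 (s + t) = (G1 s).comp (G1 t)) (hG1zero : G1 0 = 1)
    (hG2grp : ∀ s t : ℝ, G2 (s + t) = (G2 s).comp (G2 t)) (hG2zero : G2 0 = 1)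
    (hG1iso : ∀ (k : ℝ) (x : H1), ‖G1 k x‖ = ‖x‖)
    (hG2iso : ∀ (k : ℝ) (x : H2), ‖G2 k x‖ = ‖x‖)
    (hG1cont : ∀ x : H1, Continuous fun k : ℝ => G1 k x)
    (hG2cont : ∀ x : H2, Continuous fun k : ℝ => G2 k x)
    -- `D₁` is the generator of `G₁`: membership in the domain is equivalent to
    -- differentiability of the orbit, and the derivative is `i • D₁ x`.
    (hD1gen : ∀ x : H1, x ∈ D1.domain ↔ ∃ y : H1, HasDerivAt (fun k : ℝ => G1 k x) y 0)
    (hD1der : ∀ x : D1.domain,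
      HasDerivAt (fun k : ℝ => G1 k (x : H1)) (Complex.I • D1 x) 0)
    (hD2gen : ∀ x : H2, x ∈ D2.domain ↔ ∃ y : H2, HasDerivAt (fun k : ℝ => G2 k x) y 0)
    (hD2der : ∀ x : D2.domain,
      HasDerivAt (fun k : ℝ => G2 k (x : H2)) (Complex.I • D2 x) 0)
    (W : H1 →L[ℂ] H2)
    (hW : HasDerivAt (fun k : ℝ => (G2 k).comp (V.comp (G1 (-k)))) (Complex.I • W) 0) :
    ∀ x : D1.domain, ∃ h : V (x : H1) ∈ D2.domain,
      D2 ⟨V (x : H1), h⟩ = W (x : H1) + V (D1 x) :=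
  commutator_bounded_of_differentiable_general V D1 D2 G1 G2 hG1grp hG1zero hG2zero hD1der hD2gen
    hD2der W hW
end

section
/- Let r(1), r(2) > 0 and let V : ℓ²(r(1)ℤ) → ℓ²(r(2)ℤ) be a bounded operator that is uniform with respect to the diagonal position operators D_{r(1)} and D_{r(2)} (i.e., k ↦ e^{ikD_{r(2)}} V e^{-ikD_{r(1)}} is norm continuous). For y ∈ r(1)ℕ define the measure p_y = Σ_{x ∈ r(2)ℤ} |⟨Vδ_y, δ_x⟩|² δ_{x/y} on ℝ. Then for every δ > 0, lim_{y→∞} p_y((−∞, 1−δ] ∪ [1+δ, ∞)) = 0. -/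
/-!
Write `a x = ⟪e₂ x, V e₁ y⟫` and `θ x = r₂ x - r₁ y`. The hypothesis on `T` says that
`⟪e₂ x, (T k - V) e₁ y⟫ = (e^{ikθ x} - 1) a x`, so Bessel's inequality gives
`∑ₓ (2 - 2 cos (k θ x)) |a x|² ≤ ‖T k - V‖²` for every `k`. Averaging over `k ∈ [0, k₀]`
turns the weight into `2 - 2 sin (k₀ θ) / (k₀ θ)`, which is at least `1` once `|θ| ≥ 2 / k₀`.
Hence the mass of `|a|²` where `|θ| ≥ 2 / k₀` is bounded by `sup_{[0, k₀]} ‖T k - V‖²`, small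
for small `k₀` by continuity; and `|x / y - 1| ≥ δ` forces `|θ x| ≥ δ r₁ y ≥ 2 / k₀` for large `y`.
-/

open scoped InnerProductSpace
open Filter Set

lemma norm_exp_I_mul_ofReal_sub_one_sq (t : ℝ) :
    ‖Complex.exp (Complex.I * t) - 1‖ ^ 2 = 2 - 2 * Real.cos t := by
  have h := Real.cos_two_mul_eq_one_sub (t / 2)
  rw [mul_div_cancel₀ t two_ne_zero] at h
  rw [Complex.norm_exp_I_mul_ofReal_sub_one, norm_mul, mul_pow, Real.norm_eq_abs, sq_abs, h]
  norm_num
  ring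

lemma norm_exp_I_mul_ofReal_mul_sub_sq (t : ℝ) (z : ℂ) :
    ‖Complex.exp (Complex.I * t) * z - z‖ ^ 2 = (2 - 2 * Real.cos t) * ‖z‖ ^ 2 := by
  rw [← sub_one_mul, norm_mul, mul_pow, norm_exp_I_mul_ofReal_sub_one_sq]

lemma integral_two_sub_two_cos_mul {θ : ℝ} (k₀ : ℝ) (hθ : θ ≠ 0) :
    ∫ k in (0:ℝ)..k₀, (2 - 2 * Real.cos (k * θ)) = 2 * k₀ - 2 * (Real.sin (k₀ * θ) / θ) := by
  have hcos : ∫ k in (0:ℝ)..k₀, Real.cos (k * θ) = Real.sin (k₀ * θ) / θ := by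
    rw [intervalIntegral.integral_comp_mul_right Real.cos hθ, integral_cos]
    simp only [zero_mul, Real.sin_zero, sub_zero, smul_eq_mul]
    ring
  rw [intervalIntegral.integral_sub intervalIntegrable_const
    ((by fun_prop : Continuous fun k => 2 * Real.cos (k * θ)).intervalIntegrable 0 k₀),
    intervalIntegral.integral_const_mul, hcos, intervalIntegral.integral_const, smul_eq_mul,
    sub_zero, mul_comm]

lemma le_integral_two_sub_two_cos_mul {θ k₀ : ℝ} (hk₀ : 0 < k₀) (hθ : 2 / k₀ ≤ |θ|) :
    k₀ ≤ ∫ k in (0:ℝ)..k₀, (2 - 2 * Real.cos (k * θ)) := by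
  have hθpos : 0 < |θ| := (by positivity : (0:ℝ) < 2 / k₀).trans_le hθ
  rw [integral_two_sub_two_cos_mul k₀ (abs_pos.mp hθpos)]
  have hsin : |Real.sin (k₀ * θ) / θ| ≤ k₀ / 2 :=
    calc |Real.sin (k₀ * θ) / θ| ≤ 1 / |θ| := by
          rw [abs_div]; gcongr; exact Real.abs_sin_le_one _
      _ ≤ k₀ / 2 := by
          rw [div_le_iff₀ hθpos]; rw [div_le_iff₀ hk₀] at hθ; linarith
  linarith [(abs_le.mp hsin).2]

lemma Finset.sum_le_of_forall_sum_two_sub_two_cos_mul_le {ι : Type*} (s : Finset ι)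
    {w θ : ι → ℝ} (hw : ∀ i ∈ s, 0 ≤ w i) {k₀ C : ℝ} (hk₀ : 0 < k₀)
    (hθ : ∀ i ∈ s, 2 / k₀ ≤ |θ i|)
    (hC : ∀ k ∈ Set.Icc 0 k₀, ∑ i ∈ s, (2 - 2 * Real.cos (k * θ i)) * w i ≤ C) :
    ∑ i ∈ s, w i ≤ C := by
  refine le_of_mul_le_mul_left ?_ hk₀
  calc k₀ * ∑ i ∈ s, w i
      ≤ ∑ i ∈ s, (∫ k in (0:ℝ)..k₀, (2 - 2 * Real.cos (k * θ i))) * w i := by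
        rw [Finset.mul_sum]
        exact Finset.sum_le_sum fun i hi =>
          mul_le_mul_of_nonneg_right (le_integral_two_sub_two_cos_mul hk₀ (hθ i hi)) (hw i hi)
    _ = ∫ k in (0:ℝ)..k₀, ∑ i ∈ s, (2 - 2 * Real.cos (k * θ i)) * w i := by
        rw [intervalIntegral.integral_finsetSum fun i _ =>
          Continuous.intervalIntegrable (by fun_prop) _ _]
        simp only [intervalIntegral.integral_mul_const]
    _ ≤ ∫ _ in (0:ℝ)..k₀, C :=
        intervalIntegral.integral_mono_on hk₀.le (Continuous.intervalIntegrable (by fun_prop) _ _)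
          intervalIntegrable_const hC
    _ = k₀ * C := by simp

theorem tsum_norm_inner_sq_le_of_phase_shift {ι E : Type*} [NormedAddCommGroup E]
    [InnerProductSpace ℂ E] {u : ι → E} (hu : Orthonormal ℂ u) (w : ℝ → E) (w₀ : E) (θ : ι → ℝ)
    (hw : ∀ k i, ⟪u i, w k⟫_ℂ = Complex.exp (Complex.I * k * θ i) * ⟪u i, w₀⟫_ℂ)
    {k₀ C : ℝ} (hk₀ : 0 < k₀) (hC : ∀ k ∈ Icc 0 k₀, ‖w k - w₀‖ ^ 2 ≤ C)
    (P : ι → Prop) (hP : ∀ i, P i → 2 / k₀ ≤ |θ i|) :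
    ∑' i : {i // P i}, ‖⟪u i, w₀⟫_ℂ‖ ^ 2 ≤ C := by
  have hC₀ : 0 ≤ C := (sq_nonneg _).trans (hC 0 ⟨le_rfl, hk₀.le⟩)
  refine tsum_le_of_sum_le' hC₀ fun s =>
    s.sum_le_of_forall_sum_two_sub_two_cos_mul_le (fun _ _ => sq_nonneg _) hk₀
      (fun i _ => hP i i.2) fun k hk => ?_
  calc ∑ i ∈ s, (2 - 2 * Real.cos (k * θ i)) * ‖⟪u i, w₀⟫_ℂ‖ ^ 2
      = ∑ i ∈ s, ‖⟪u i, w k - w₀⟫_ℂ‖ ^ 2 := by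
        refine Finset.sum_congr rfl fun i _ => ?_
        rw [inner_sub_right, hw, ← norm_exp_I_mul_ofReal_mul_sub_sq, Complex.ofReal_mul, mul_assoc]
    _ ≤ ‖w k - w₀‖ ^ 2 := (hu.comp _ Subtype.val_injective).sum_inner_products_le _
    _ ≤ C := hC k hk

theorem transition_probability_concentrates_general
    {H1 H2 : Type*} [NormedAddCommGroup H1] [InnerProductSpace ℂ H1]
    [NormedAddCommGroup H2] [InnerProductSpace ℂ H2]
    (r1 r2 : ℝ) (hr1 : 0 < r1)
    (e1 : HilbertBasis ℤ ℂ H1) (e2 : HilbertBasis ℤ ℂ H2)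
    (V : H1 →L[ℂ] H2)
    (T : ℝ → (H1 →L[ℂ] H2))
    (hT0 : T 0 = V)
    (hTcont : Continuous T)
    (hTmat : ∀ (k : ℝ) (x y : ℤ),
      ⟪e2 x, T k (e1 y)⟫_ℂ =
        Complex.exp (Complex.I * k * ((r2 * x : ℝ) - (r1 * y : ℝ))) * ⟪e2 x, V (e1 y)⟫_ℂ)
    (δ : ℝ) (hδ : 0 < δ) :
    Tendsto (fun y : ℕ =>
        ∑' x : {x : ℤ // δ ≤ |(r2 * x) / (r1 * y) - 1|},
          ‖⟪e2 (x : ℤ), V (e1 (y : ℤ))⟫_ℂ‖ ^ 2)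
      atTop (nhds 0) := by
  refine tendsto_order.2 ⟨fun a ha => .of_forall fun y => ha.trans_le (tsum_nonneg fun _ =>
    sq_nonneg _), fun ε hε => ?_⟩
  have hTV : Tendsto (fun k => ‖T k - V‖ ^ 2) (nhds 0) (nhds 0) := by
    have : Continuous fun k => ‖T k - V‖ ^ 2 := by fun_prop
    simpa [hT0] using this.tendsto 0
  obtain ⟨k₀, hk₀, hsmall⟩ := mem_nhdsGE_iff_exists_Icc_subset.mp
    (nhdsWithin_le_nhds (hTV.eventually (gt_mem_nhds (half_pos hε))))
  filter_upwards [tendsto_natCast_atTop_atTop.eventually_ge_atTop (2 / (k₀ * δ * r1))] with y hy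
  have hy₀ : 0 < r1 * y := mul_pos hr1 ((by positivity : (0:ℝ) < 2 / (k₀ * δ * r1)).trans_le hy)
  refine (tsum_norm_inner_sq_le_of_phase_shift e2.orthonormal (fun k => T k (e1 y)) (V (e1 y))
    (fun x => r2 * x - r1 * y) (fun k x => ?_) hk₀ (fun k hk => ?_) _ fun x hx => ?_).trans_lt
    (half_lt_self hε)
  · rw [hTmat, Complex.ofReal_sub, Int.cast_natCast]
  · calc ‖T k (e1 y) - V (e1 y)‖ ^ 2 ≤ ‖T k - V‖ ^ 2 := by
          gcongr; exact (T k - V).unit_le_opNorm _ (e1.orthonormal.1 y).le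
      _ ≤ ε / 2 := (hsmall hk).le
  · rw [div_sub_one hy₀.ne', abs_div, abs_of_pos hy₀, le_div_iff₀ hy₀] at hx
    rw [div_le_iff₀ (by positivity)] at hy
    rw [div_le_iff₀ hk₀]
    nlinarith

/-- Let `V : ℓ²(r₁ℤ) → ℓ²(r₂ℤ)` be a bounded operator which is uniform with
respect to the diagonal position operators `D_{r₁}`, `D_{r₂}` (i.e. the conjugated family
`T k = e^{ikD_{r₂}} V e^{-ikD_{r₁}}`, characterized by its matrix coefficients, is norm
continuous in `k`).  For `y ∈ r₁ℕ` let `p_y` be the measure `Σ_x |⟨Vδ_y, δ_x⟩|² δ_{x/y}`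
on `ℝ`; then for every `δ > 0`, `p_y((-∞, 1-δ] ∪ [1+δ, ∞)) → 0` as `y → ∞`.
The spaces `ℓ²(r·ℤ)` are modeled as Hilbert spaces with a Hilbert basis indexed by `ℤ`,
the basis vector `e ι x` sitting at position `r(ι) * x`. -/
theorem transition_probability_concentrates
    {H1 H2 : Type*} [NormedAddCommGroup H1] [InnerProductSpace ℂ H1] [CompleteSpace H1]
    [NormedAddCommGroup H2] [InnerProductSpace ℂ H2] [CompleteSpace H2]
    (r1 r2 : ℝ) (hr1 : 0 < r1) (hr2 : 0 < r2)
    (e1 : HilbertBasis ℤ ℂ H1) (e2 : HilbertBasis ℤ ℂ H2)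
    (V : H1 →L[ℂ] H2)
    (T : ℝ → (H1 →L[ℂ] H2))
    (hT0 : T 0 = V)
    (hTcont : Continuous T)
    (hTmat : ∀ (k : ℝ) (x y : ℤ),
      ⟪e2 x, T k (e1 y)⟫_ℂ =
        Complex.exp (Complex.I * k * ((r2 * x : ℝ) - (r1 * y : ℝ))) * ⟪e2 x, V (e1 y)⟫_ℂ)
    (δ : ℝ) (hδ : 0 < δ) :
    Tendsto (fun y : ℕ =>
        ∑' x : {x : ℤ // δ ≤ |(r2 * x) / (r1 * y) - 1|},
          ‖⟪e2 (x : ℤ), V (e1 (y : ℤ))⟫_ℂ‖ ^ 2)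
      atTop (nhds 0) :=
  transition_probability_concentrates_general r1 r2 hr1 e1 e2 V T hT0 hTcont hTmat δ hδ
end

section
/- Let (H, (Uᵗ)_{t∈ℤ}, D) be a smooth discrete-time quantum walk and ξ a smooth unit vector. With p_t the rescaled position distribution at time t, for every positive integer m one has limsup_{t→∞} | ∫ vᵐ p_t(dv) | ≤ ‖[D, U]‖ᵐ. -/
/-!
Iterating `[D, u k] = u (k + 1)` gives the Leibniz formula `Dʲ U = ∑ₖ (j choose k) u k D^(j-k)`,
so `aⱼ(t) = ‖Dʲ Uᵗ ξ‖` obeys `aⱼ(t+1) ≤ ∑ₖ (j choose k) ‖u k‖ a_{j-k}(t)` with `a₀ = 1`.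
By strong induction on `j`, `aⱼ(t) ≤ ‖u 1‖ʲ tʲ + K ((t+1)ʲ - tʲ)`: summed over time, the `k = 1`
term produces the leading `‖u 1‖ʲ tʲ`, while the terms with `k ≥ 2` only see lower powers of `t`.
Since the `m`-th moment is bounded by `t⁻ᵐ aₘ(t)`, its limsup is at most `‖u 1‖ᵐ`.
-/

open Finset MeasureTheory Filter
open scoped InnerProductSpace

theorem add_one_pow_sub_pow_eq_sum {R : Type*} [CommRing R] (x : R) (n : ℕ) :
    (x + 1) ^ n - x ^ n = ∑ i ∈ range n, (x + 1) ^ i * x ^ (n - 1 - i) := by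
  simpa using (geom_sum₂_mul (x + 1) x n).symm

section PowerDifference

variable {R : Type*} [CommRing R] [LinearOrder R] [IsStrictOrderedRing R] {x : R}

theorem succ_mul_pow_le_add_one_pow_sub_pow (hx : 0 ≤ x) (n : ℕ) :
    (n + 1) * x ^ n ≤ (x + 1) ^ (n + 1) - x ^ (n + 1) := by
  rw [add_one_pow_sub_pow_eq_sum]
  calc (n + 1) * x ^ n = ∑ i ∈ range (n + 1), x ^ i * x ^ (n - i) := by
        rw [sum_congr rfl fun i hi => by
          rw [← pow_add, Nat.add_sub_cancel' (mem_range_succ_iff.mp hi)]]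
        simp
    _ ≤ _ := sum_le_sum fun i _ => by
        simp only [Nat.add_sub_cancel]
        gcongr
        linarith

theorem add_one_pow_le_add_one_pow_sub_pow (hx : 0 ≤ x) {i n : ℕ} (hin : i < n) :
    (x + 1) ^ i ≤ (x + 1) ^ n - x ^ n := by
  rw [add_one_pow_sub_pow_eq_sum]
  calc (x + 1) ^ i ≤ (x + 1) ^ (n - 1) * x ^ (n - 1 - (n - 1)) := by
        rw [Nat.sub_self, pow_zero, mul_one]
        exact pow_le_pow_right₀ (by linarith) (by omega)
    _ ≤ _ := single_le_sum (f := fun j => (x + 1) ^ j * x ^ (n - 1 - j))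
        (fun j _ => mul_nonneg (pow_nonneg (by linarith) _) (pow_nonneg hx _))
        (mem_range.mpr (by omega))

end PowerDifference

theorem le_add_sum_range_of_le_add {α : Type*} [AddCommMonoid α] [PartialOrder α]
    [IsOrderedAddMonoid α] {f g : ℕ → α} (h : ∀ n, f (n + 1) ≤ f n + g n) (n : ℕ) :
    f n ≤ f 0 + ∑ i ∈ range n, g i := by
  induction n with
  | zero => simp
  | succ n ih =>
    calc f (n + 1) ≤ f n + g n := h n
      _ ≤ f 0 + ∑ i ∈ range n, g i + g n := by gcongr
      _ = _ := by rw [sum_range_succ, add_assoc]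

namespace LinearPMap

variable {R E : Type*} [Ring R] [AddCommGroup E] [Module R E]

def IsOrbit (D : E →ₗ.[R] E) (y : ℕ → E) : Prop :=
  ∀ n, ∃ h : y n ∈ D.domain, y (n + 1) = D ⟨y n, h⟩

def IsIteratedCommutator {F : Type*} [FunLike F E E] (D : E →ₗ.[R] E) (u : ℕ → F) : Prop :=
  ∀ (m : ℕ) (x : D.domain), ∃ h : u m x ∈ D.domain, u (m + 1) x = D ⟨u m x, h⟩ - u m (D x)

variable {D : E →ₗ.[R] E} {y z : ℕ → E}

theorem IsOrbit.unique (hy : D.IsOrbit y) (hz : D.IsOrbit z) (h0 : y 0 = z 0) : y = z := by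
  funext n
  induction n with
  | zero => exact h0
  | succ n ih =>
    obtain ⟨_, hy⟩ := hy n
    obtain ⟨_, hz⟩ := hz n
    rw [hy, hz]
    congr 1
    exact Subtype.ext ih

theorem IsOrbit.leibniz {F : Type*} [FunLike F E E] [AddMonoidHomClass F E E] {u : ℕ → F}
    (hu : D.IsIteratedCommutator u) (hy : D.IsOrbit y) :
    D.IsOrbit fun j => ∑ k ∈ range (j + 1), j.choose k • u k (y (j - k)) := by
  intro j
  have hdom : ∀ k i, u k (y i) ∈ D.domain := fun k i => (hu k ⟨y i, (hy i).1⟩).1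
  have hD : ∀ k i, D ⟨u k (y i), hdom k i⟩ = u (k + 1) (y i) + u k (y (i + 1)) := by
    intro k i
    obtain ⟨_, e⟩ := hu k ⟨y i, (hy i).1⟩
    rw [(hy i).2]
    exact sub_eq_iff_eq_add.mp e.symm
  set v : ℕ → D.domain := fun k => j.choose k • ⟨u k (y (j - k)), hdom k (j - k)⟩
  have hv : ∑ k ∈ range (j + 1), j.choose k • u k (y (j - k)) =
      ↑(∑ k ∈ range (j + 1), v k) := by
    simp [v]
  refine ⟨by simp only [hv]; exact (∑ k ∈ range (j + 1), v k).2, ?_⟩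
  calc ∑ k ∈ range (j + 1 + 1), (j + 1).choose k • u k (y (j + 1 - k))
      = ∑ k ∈ range (j + 1), j.choose k • (u (k + 1) (y (j - k)) + u k (y (j - k + 1))) := by
        rw [sum_choose_succ_nsmul (fun k i => u k (y i)), add_comm, ← sum_add_distrib]
        refine sum_congr rfl fun k hk => ?_
        rw [smul_add, Nat.sub_add_comm (mem_range_succ_iff.mp hk)]
    _ = ∑ k ∈ range (j + 1), D (v k) :=
        sum_congr rfl fun k _ => by rw [← hD]; exact (map_nsmul D.toFun _ _).symm
    _ = D ⟨_, _⟩ := (map_sum D.toFun v _).symm.trans (congrArg D (Subtype.ext hv.symm))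

theorem IsOrbit.norm_le_sum_choose {𝕜 E : Type*} [NontriviallyNormedField 𝕜]
    [NormedAddCommGroup E] [NormedSpace 𝕜 E] {D : E →ₗ.[𝕜] E} {u : ℕ → E →L[𝕜] E}
    (hu : D.IsIteratedCommutator u)
    {y z : ℕ → E} (hy : D.IsOrbit y) (hz : D.IsOrbit z) (hz0 : z 0 = u 0 (y 0)) (j : ℕ) :
    ‖z j‖ ≤ ∑ k ∈ range (j + 1), j.choose k * ‖u k‖ * ‖y (j - k)‖ := by
  rw [hz.unique (hy.leibniz hu) (by simpa using hz0)]
  refine (norm_sum_le _ _).trans (sum_le_sum fun k _ => ?_)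
  rw [mul_assoc]
  exact norm_nsmul_le.trans (by gcongr; exact (u k).le_opNorm _)

end LinearPMap

structure IsLeibnizSubsolution (a : ℕ → ℕ → ℝ) (b : ℕ → ℝ) : Prop where
  nonneg : ∀ t j, 0 ≤ a t j
  coeff_nonneg : ∀ k, 0 ≤ b k
  coeff_zero_le_one : b 0 ≤ 1
  zeroth_le_one : ∀ t, a t 0 ≤ 1
  succ_le : ∀ t j, a (t + 1) j ≤ ∑ k ∈ range (j + 1), j.choose k * b k * a t (j - k)

namespace IsLeibnizSubsolution

variable {a : ℕ → ℕ → ℝ} {b : ℕ → ℝ}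

theorem exists_succ_le_add (h : IsLeibnizSubsolution a b) {j : ℕ} {K : ℕ → ℝ}
    (hK0 : ∀ i ≤ j, 0 ≤ K i)
    (hK : ∀ i ≤ j, ∀ t : ℕ, a t i ≤ b 1 ^ i * t ^ i + K i * ((t + 1) ^ i - t ^ i)) :
    ∃ L, 0 ≤ L ∧ ∀ s : ℕ, a (s + 1) (j + 1) ≤ a s (j + 1) +
      b 1 ^ (j + 1) * ((s + 1) ^ (j + 1) - s ^ (j + 1)) + L * ((s + 1) ^ j - s ^ j) := by
  have hb := h.coeff_nonneg
  have hcrude : ∀ i ≤ j, ∀ s : ℕ, a s i ≤ (b 1 ^ i + K i) * ((s : ℝ) + 1) ^ i := by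
    intro i hi s
    have hs : (0 : ℝ) ≤ s ^ i := by positivity
    have hs1 : (s : ℝ) ^ i ≤ (s + 1) ^ i := pow_le_pow_left₀ (by positivity) (by linarith) i
    nlinarith [hK i hi s, hK0 i hi, pow_nonneg (hb 1) i]
  set w : ℕ → ℝ := fun k =>
    (j + 1).choose (k + 2) * b (k + 2) * (b 1 ^ (j - (k + 1)) + K (j - (k + 1)))
  have hw : ∀ k < j, 0 ≤ w k := fun k hk =>
    mul_nonneg (mul_nonneg (by positivity) (hb _))
      (add_nonneg (pow_nonneg (hb 1) _) (hK0 _ (by omega)))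
  refine ⟨(j + 1) * b 1 * K j + ∑ k ∈ range j, w k,
    add_nonneg (mul_nonneg (mul_nonneg (by positivity) (hb 1)) (hK0 j le_rfl))
      (sum_nonneg fun k hk => hw k (mem_range.mp hk)), fun s => ?_⟩
  have hs : (0 : ℝ) ≤ s := Nat.cast_nonneg s
  -- split off `k = 0`, the leading term `k = 1`, and the lower-order terms `k ≥ 2`
  have hk0 : (j + 1).choose 0 * b 0 * a s (j + 1 - 0) ≤ a s (j + 1) := by
    simpa using mul_le_of_le_one_left (h.nonneg s (j + 1)) h.coeff_zero_le_one
  have hk1 : ((j + 1).choose (0 + 1) : ℝ) * b (0 + 1) * a s (j + 1 - (0 + 1)) ≤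
      b 1 ^ (j + 1) * ((s + 1) ^ (j + 1) - s ^ (j + 1)) +
        (j + 1) * b 1 * K j * ((s + 1) ^ j - s ^ j) := by
    simp only [zero_add, Nat.choose_one_right, Nat.add_sub_cancel, Nat.cast_add, Nat.cast_one]
    have hj1 : (0 : ℝ) ≤ (j + 1) * b 1 := mul_nonneg (by positivity) (hb 1)
    calc ((j : ℝ) + 1) * b 1 * a s j
        ≤ (j + 1) * b 1 * (b 1 ^ j * s ^ j + K j * ((s + 1) ^ j - s ^ j)) :=
          mul_le_mul_of_nonneg_left (hK j le_rfl s) hj1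
      _ = b 1 ^ (j + 1) * ((j + 1) * s ^ j) + (j + 1) * b 1 * K j * ((s + 1) ^ j - s ^ j) := by
          ring
      _ ≤ _ := by
          gcongr
          · exact pow_nonneg (hb 1) _
          · exact succ_mul_pow_le_add_one_pow_sub_pow hs j
  have hk2 : ∑ k ∈ range j, ((j + 1).choose (k + 1 + 1) : ℝ) * b (k + 1 + 1) *
      a s (j + 1 - (k + 1 + 1)) ≤ ∑ k ∈ range j, w k * ((s + 1) ^ j - s ^ j) := by
    refine sum_le_sum fun k hk => ?_
    have hk : k < j := mem_range.mp hk
    rw [show j + 1 - (k + 1 + 1) = j - (k + 1) by omega]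
    calc ((j + 1).choose (k + 1 + 1) : ℝ) * b (k + 1 + 1) * a s (j - (k + 1))
        ≤ (j + 1).choose (k + 2) * b (k + 2) *
          ((b 1 ^ (j - (k + 1)) + K (j - (k + 1))) * ((s : ℝ) + 1) ^ (j - (k + 1))) :=
          mul_le_mul_of_nonneg_left (hcrude _ (by omega) s) (mul_nonneg (by positivity) (hb _))
      _ = w k * ((s : ℝ) + 1) ^ (j - (k + 1)) := by ring
      _ ≤ w k * ((s + 1) ^ j - s ^ j) :=
          mul_le_mul_of_nonneg_left (add_one_pow_le_add_one_pow_sub_pow hs (by omega)) (hw k hk)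
  have hrec := h.succ_le s (j + 1)
  rw [sum_range_succ', sum_range_succ'] at hrec
  rw [add_mul, sum_mul]
  linarith

theorem exists_le_pow_add (h : IsLeibnizSubsolution a b) (j : ℕ) :
    ∃ K, 0 ≤ K ∧ ∀ t : ℕ, a t j ≤ b 1 ^ j * t ^ j + K * ((t + 1) ^ j - t ^ j) := by
  induction j using Nat.strong_induction_on with
  | _ j ih =>
  rcases j with _ | j
  · exact ⟨0, le_rfl, fun t => by simpa using h.zeroth_le_one t⟩
  choose! K hK0 hK using ih
  obtain ⟨L, hL0, hL⟩ := h.exists_succ_le_add (K := K)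
    (fun i hi => hK0 i (Nat.lt_succ_of_le hi)) (fun i hi => hK i (Nat.lt_succ_of_le hi))
  refine ⟨a 0 (j + 1) + L, add_nonneg (h.nonneg 0 _) hL0, fun t => ?_⟩
  have hpow_sum : ∀ n, ∑ s ∈ range t, (((s : ℝ) + 1) ^ n - s ^ n) = (t : ℝ) ^ n - 0 ^ n :=
      fun n => by
    simpa using sum_range_sub (fun s : ℕ => (s : ℝ) ^ n) t
  have htel := le_add_sum_range_of_le_add (f := fun t => a t (j + 1))
    (fun s => (hL s).trans_eq (add_assoc _ _ _)) t
  simp only [sum_add_distrib, ← mul_sum, hpow_sum, zero_pow j.succ_ne_zero, sub_zero] at htel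
  have ht : (0 : ℝ) ≤ t := Nat.cast_nonneg t
  have hδ : ((t : ℝ) + 1) ^ j ≤ (t + 1) ^ (j + 1) - t ^ (j + 1) :=
    add_one_pow_le_add_one_pow_sub_pow ht (Nat.lt_succ_self j)
  have hone : (1 : ℝ) ≤ (t + 1) ^ j := one_le_pow₀ (by linarith)
  have hmono : (t : ℝ) ^ j ≤ (t + 1) ^ j := pow_le_pow_left₀ ht (by linarith) j
  have hzero : (0 : ℝ) ≤ 0 ^ j := pow_nonneg le_rfl j
  nlinarith [h.nonneg 0 (j + 1)]

theorem limsup_le_of_le_div_pow (h : IsLeibnizSubsolution a b) (j : ℕ) {f : ℕ → ℝ}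
    (hf0 : ∀ t, 0 ≤ f t) (hf : ∀ᶠ t in atTop, f t ≤ a t j / (t : ℝ) ^ j) :
    limsup f atTop ≤ b 1 ^ j := by
  obtain ⟨K, -, hK⟩ := h.exists_le_pow_add j
  have hg : Tendsto (fun t : ℕ => b 1 ^ j + K * ((1 + (t : ℝ)⁻¹) ^ j - 1)) atTop
      (nhds (b 1 ^ j)) := by
    simpa using ((tendsto_inv_atTop_nhds_zero_nat.const_add 1).pow j).sub_const 1
      |>.const_mul K |>.const_add (b 1 ^ j)
  have hfg : ∀ᶠ t : ℕ in atTop, f t ≤ b 1 ^ j + K * ((1 + (t : ℝ)⁻¹) ^ j - 1) := by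
    filter_upwards [hf, eventually_gt_atTop 0] with t hft ht
    have ht : (0 : ℝ) < t := Nat.cast_pos.mpr ht
    refine hft.trans ?_
    rw [div_le_iff₀ (by positivity)]
    refine (hK t).trans_eq ?_
    have hpow : (1 + (t : ℝ)⁻¹) ^ j * t ^ j = (t + 1) ^ j := by
      rw [← mul_pow, add_mul, one_mul, inv_mul_cancel₀ ht.ne']
    linear_combination (-K) * hpow
  calc limsup f atTop ≤ limsup (fun t : ℕ => b 1 ^ j + K * ((1 + (t : ℝ)⁻¹) ^ j - 1)) atTop :=
        limsup_le_limsup hfg (isCoboundedUnder_le_of_le atTop hf0) hg.isBoundedUnder_le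
    _ = b 1 ^ j := hg.limsup_eq

end IsLeibnizSubsolution

theorem limsup_moment_le_commutator_norm_pow_general
    {H : Type*} [NormedAddCommGroup H] [InnerProductSpace ℂ H] [CompleteSpace H]
    (D : H →ₗ.[ℂ] H)
    (U : H →L[ℂ] H) (hU : U ∈ unitary (H →L[ℂ] H))
    -- smoothness of the walk: the iterated commutators are bounded operators
    (u : ℕ → (H →L[ℂ] H)) (hu0 : u 0 = U)
    (hu : ∀ (m : ℕ) (ξ : D.domain), ∃ h : u m (ξ : H) ∈ D.domain,
      u (m + 1) (ξ : H) = D ⟨u m (ξ : H), h⟩ - u m (D ξ))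
    (ξ : H) (hξ : ‖ξ‖ = 1)
    -- smoothness of `ξ`: the vectors `c t m = Dᵐ Uᵗ ξ` exist
    (c : ℕ → ℕ → H)
    (hc0 : ∀ t : ℕ, c t 0 = (U ^ t) ξ)
    (hc : ∀ t m : ℕ, ∃ h : c t m ∈ D.domain, c t (m + 1) = D ⟨c t m, h⟩)
    -- the rescaled position distributions and their moments
    (p : ℕ → Measure ℝ)
    (hmom : ∀ t m : ℕ, 0 < t → ∫ v, v ^ m ∂(p t) =
      (⟪(((t : ℝ) ^ m)⁻¹ : ℝ) • c t m, (U ^ t) ξ⟫_ℂ).re)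
    (m : ℕ) :
    Filter.limsup (fun t : ℕ => |∫ v, v ^ m ∂(p t)|) atTop ≤ ‖u 1‖ ^ m := by
  have hUt : ∀ t, ‖(U ^ t) ξ‖ = 1 := fun t => by
    rw [ContinuousLinearMap.norm_map_of_mem_unitary (pow_mem hU t), hξ]
  have hsub : IsLeibnizSubsolution (fun t j => ‖c t j‖) (fun k => ‖u k‖) :=
    { nonneg := fun _ _ => norm_nonneg _
      coeff_nonneg := fun _ => norm_nonneg _
      coeff_zero_le_one := hu0 ▸ U.opNorm_le_bound zero_le_one fun x => by
        rw [ContinuousLinearMap.norm_map_of_mem_unitary hU, one_mul]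
      zeroth_le_one := fun t => (hc0 t ▸ hUt t).le
      succ_le := fun t => LinearPMap.IsOrbit.norm_le_sum_choose hu (hc t) (hc (t + 1))
        (by rw [hc0, hc0, hu0, pow_succ']; rfl) }
  refine hsub.limsup_le_of_le_div_pow m (fun _ => abs_nonneg _) ?_
  filter_upwards [eventually_gt_atTop 0] with t ht
  rw [hmom t m ht, le_div_iff₀ (by positivity)]
  calc |(⟪(((t : ℝ) ^ m)⁻¹ : ℝ) • c t m, (U ^ t) ξ⟫_ℂ).re| * (t : ℝ) ^ m
      ≤ ‖(((t : ℝ) ^ m)⁻¹ : ℝ) • c t m‖ * ‖(U ^ t) ξ‖ * (t : ℝ) ^ m := by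
        gcongr
        exact (Complex.abs_re_le_norm _).trans (norm_inner_le_norm _ _)
    _ = ‖c t m‖ := by
        rw [hUt, norm_smul, Real.norm_of_nonneg (by positivity)]
        field_simp

/-- Let `(H, (Uᵗ), D)` be a smooth discrete-time quantum walk (all iterated
commutators `u m = [D,[D,…,[D,U]…]]` are bounded) and `ξ` a smooth unit vector (the
vectors `c t m = Dᵐ Uᵗ ξ` are all defined).  With `p t` the rescaled position
distribution at time `t`, whose `m`-th moment is `⟨ t^{-m} Dᵐ Uᵗ ξ, Uᵗ ξ ⟩`, for every
positive integer `m` one has `limsup_t |∫ vᵐ p_t(dv)| ≤ ‖[D,U]‖ᵐ`. -/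
theorem limsup_moment_le_commutator_norm_pow
    {H : Type*} [NormedAddCommGroup H] [InnerProductSpace ℂ H] [CompleteSpace H]
    (D : H →ₗ.[ℂ] H) (hD : IsSelfAdjoint D)
    (U : H →L[ℂ] H) (hU : U ∈ unitary (H →L[ℂ] H))
    -- smoothness of the walk: the iterated commutators are bounded operators
    (u : ℕ → (H →L[ℂ] H)) (hu0 : u 0 = U)
    (hu : ∀ (m : ℕ) (ξ : D.domain), ∃ h : u m (ξ : H) ∈ D.domain,
      u (m + 1) (ξ : H) = D ⟨u m (ξ : H), h⟩ - u m (D ξ))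
    (ξ : H) (hξ : ‖ξ‖ = 1)
    -- smoothness of `ξ`: the vectors `c t m = Dᵐ Uᵗ ξ` exist
    (c : ℕ → ℕ → H)
    (hc0 : ∀ t : ℕ, c t 0 = (U ^ t) ξ)
    (hc : ∀ t m : ℕ, ∃ h : c t m ∈ D.domain, c t (m + 1) = D ⟨c t m, h⟩)
    -- the rescaled position distributions and their moments
    (p : ℕ → Measure ℝ)
    (hp : ∀ t, IsProbabilityMeasure (p t))
    (hpint : ∀ t m : ℕ, Integrable (fun v : ℝ => v ^ m) (p t))
    (hmom : ∀ t m : ℕ, 0 < t → ∫ v, v ^ m ∂(p t) =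
      (⟪(((t : ℝ) ^ m)⁻¹ : ℝ) • c t m, (U ^ t) ξ⟫_ℂ).re)
    (m : ℕ) (hm : 0 < m) :
    Filter.limsup (fun t : ℕ => |∫ v, v ^ m ∂(p t)|) atTop ≤ ‖u 1‖ ^ m :=
  limsup_moment_le_commutator_norm_pow_general D U hU u hu0 hu ξ hξ c hc0 hc p hmom m
end

section
/- Let (H, (Uᵗ)_{t∈ℤ}, D) be a smooth discrete-time quantum walk and ξ a smooth unit vector. For every real L > ‖[D,U]‖, lim_{t→∞} p_t((−∞, −L] ∪ [L, ∞)) = 0. Consequently, if the weak limit of p_t exists, its support is contained in [−‖[D,U]‖, ‖[D,U]‖] and in particular is compact. -/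
/-!
Write `u j = ad_Dʲ U`, so `u 1 = [D, U]`. Because `ad_D` is a derivation, `Dᵐ Uᵗ ξ` expands
by the Leibniz rule as `∑ₖ (m choose k) • ad_Dᵏ(Uᵗ) (D^(m-k) ξ)`, and `ad_Dᵏ(Uᵗ)` is the sum,
over the `tᵏ` maps `s : Fin k → Fin t` (which of the `t` factors each derivation hits), of the
words `∏ᵢ u (#s⁻¹(i))`. The `t.descFactorial k` injective `s` give words made of `k` factors
`[D, U]` and unitaries, of norm `≤ ‖[D, U]‖ᵏ`; the other `O(tᵏ⁻¹)` words are bounded by a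
constant. Hence `‖Dᵐ Uᵗ ξ‖ ≤ (‖[D, U]‖ᵐ + o(1)) tᵐ`, so the even moments of the rescaled
distributions satisfy `∫ v²ᵐ dp_t ≤ ‖[D, U]‖²ᵐ + o(1)`. Chebyshev's inequality with `m` large
then gives `p_t(|v| ≥ L) → 0` for `L > ‖[D, U]‖`, and the portmanteau theorem transfers this to
a weak limit.
-/

open scoped InnerProductSpace
open MeasureTheory Filter Finset Function

section Graph

variable {R E : Type*} [Ring R] [AddCommGroup E] [Module R E] {D : E →ₗ.[R] E}

theorem LinearPMap.mem_graph_of_commutator {A B : E → E}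
    (h : ∀ x : D.domain, ∃ hx : A x ∈ D.domain, B x = D ⟨A x, hx⟩ - A (D x)) {x y : E}
    (hxy : (x, y) ∈ D.graph) : (A x, A y + B x) ∈ D.graph := by
  obtain ⟨⟨x, hx⟩, rfl, rfl⟩ := D.mem_graph_iff.1 hxy
  obtain ⟨hAx, hB⟩ := h ⟨x, hx⟩
  exact D.mem_graph_iff.2 ⟨⟨_, hAx⟩, rfl, by rw [hB, add_sub_cancel]⟩

theorem LinearPMap.leibniz_of_mem_graph {T : ℕ → E → E} {d c : ℕ → E}
    (hT : ∀ k x y, (x, y) ∈ D.graph → (T k x, T k y + T (k + 1) x) ∈ D.graph)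
    (hd : ∀ j, (d j, d (j + 1)) ∈ D.graph) (hc : ∀ m, (c m, c (m + 1)) ∈ D.graph)
    (hc0 : c 0 = T 0 (d 0)) (m : ℕ) :
    c m = ∑ ij ∈ antidiagonal m, m.choose ij.1 • T ij.1 (d ij.2) := by
  induction m with
  | zero => simp [hc0]
  | succ m ih =>
    have hsum : (c m, ∑ ij ∈ antidiagonal m,
        m.choose ij.1 • (T ij.1 (d (ij.2 + 1)) + T (ij.1 + 1) (d ij.2))) ∈ D.graph := by
      rw [ih]
      convert D.graph.sum_mem (t := antidiagonal m)
        fun ij _ => nsmul_mem (hT ij.1 _ _ (hd ij.2)) (m.choose ij.1) using 1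
      ext <;> simp [Prod.fst_sum, Prod.snd_sum]
    rw [D.mem_graph_snd_inj (hc m) hsum rfl, sum_antidiagonal_choose_succ_nsmul
      (fun i j => T i (d j))]
    simp only [smul_add, sum_add_distrib]
    congr 1
    refine sum_congr rfl fun ij hij => ?_
    rw [Nat.choose_symm_of_eq_add (mem_antidiagonal.1 hij).symm]

end Graph

def fiberCard {k t : ℕ} (s : Fin k → Fin t) (i : ℕ) : ℕ := #{j | (s j : ℕ) = i}

theorem fiberCard_cons {k t : ℕ} (i : Fin t) (s : Fin k → Fin t) :
    fiberCard (Fin.cons i s : Fin (k + 1) → Fin t) = fiberCard s + Pi.single (i : ℕ) 1 := by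
  ext n
  simp only [fiberCard, card_filter, Fin.sum_univ_succ, Fin.cons_zero, Fin.cons_succ,
    Pi.add_apply, Pi.single_apply, add_comm, eq_comm]

theorem sum_fiberCard {k t : ℕ} (s : Fin k → Fin t) : ∑ i ∈ range t, fiberCard s i = k := by
  simp only [fiberCard, card_filter]
  rw [sum_comm]
  simp [sum_ite_eq, (s _).is_lt]

theorem fiberCard_le {k t : ℕ} (s : Fin k → Fin t) (i : ℕ) : fiberCard s i ≤ k :=
  (card_filter_le _ _).trans_eq (card_fin k)

theorem fiberCard_le_one {k t : ℕ} {s : Fin k → Fin t} (hs : Injective s) (i : ℕ) :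
    fiberCard s i ≤ 1 :=
  card_le_one.2 fun _ hj _ hj' => hs (Fin.ext ((mem_filter.1 hj).2.trans (mem_filter.1 hj').2.symm))

theorem card_filter_injective (k t : ℕ) :
    #{s : Fin k → Fin t | Injective s} = t.descFactorial k := by
  rw [← Fintype.card_subtype, Fintype.card_congr (Equiv.subtypeInjectiveEquivEmbedding _ _),
    Fintype.card_embedding_eq, Fintype.card_fin, Fintype.card_fin]

theorem Nat.pow_sub_descFactorial_mul_le (t k : ℕ) :
    (t ^ k - t.descFactorial k) * t ≤ k ^ 2 * t ^ k := by
  have key : ∀ k, t ^ (k + 1) ≤ t * t.descFactorial k + k ^ 2 * t ^ k := by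
    intro k
    induction k with
    | zero => simp
    | succ k ih =>
      have hdesc : t * t.descFactorial k ≤ t.descFactorial (k + 1) + k * t ^ k := by
        rw [Nat.descFactorial_succ]
        calc t * t.descFactorial k ≤ (t - k + k) * t.descFactorial k := by gcongr; omega
          _ ≤ (t - k) * t.descFactorial k + k * t ^ k := by
            rw [add_mul]; gcongr; exact t.descFactorial_le_pow k
      calc t ^ (k + 1 + 1) = t * t ^ (k + 1) := _root_.pow_succ' _ _
        _ ≤ t * (t * t.descFactorial k) + k ^ 2 * (t * t ^ k) := by nlinarith
        _ ≤ t * (t.descFactorial (k + 1) + k * t ^ k) + k ^ 2 * (t * t ^ k) := by gcongr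
        _ ≤ t * t.descFactorial (k + 1) + (k + 1) ^ 2 * t ^ (k + 1) := by
          rw [_root_.pow_succ' t k]
          nlinarith [Nat.zero_le (t * t ^ k)]
  rw [Nat.sub_mul, tsub_le_iff_right, ← _root_.pow_succ, mul_comm _ t]
  exact (key k).trans_eq (add_comm _ _)

theorem tendsto_natCast_pow_div_pow {i m : ℕ} (h : i ≤ m) :
    Tendsto (fun t : ℕ => (t : ℝ) ^ i / (t : ℝ) ^ m) atTop (nhds (if i = m then 1 else 0)) := by
  rcases h.eq_or_lt with rfl | hlt
  · rw [if_pos rfl]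
    refine tendsto_const_nhds.congr' ((eventually_gt_atTop 0).mono fun t ht => ?_)
    exact (div_self (pow_pos (Nat.cast_pos.2 ht : (0 : ℝ) < t) i).ne').symm
  · rw [if_neg hlt.ne]
    exact (tendsto_pow_div_pow_atTop_zero hlt).comp tendsto_natCast_atTop_atTop

theorem tendsto_sum_antidiagonal_choose_mul (a M : ℝ) (b : ℕ → ℝ) (m : ℕ) :
    Tendsto (fun t : ℕ => ∑ ij ∈ antidiagonal m, m.choose ij.1 *
      ((a ^ ij.1 + ij.1 ^ 2 * M ^ ij.1 / t) * (t ^ ij.1 / t ^ m)) * b ij.2)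
      atTop (nhds (a ^ m * b 0)) := by
  have hlim : a ^ m * b 0 = ∑ ij ∈ antidiagonal m,
      m.choose ij.1 * ((a ^ ij.1 + 0) * (if ij.1 = m then 1 else 0)) * b ij.2 := by
    rw [Nat.sum_antidiagonal_eq_sum_range_succ
      (fun i j => (m.choose i : ℝ) * ((a ^ i + 0) * (if i = m then 1 else 0)) * b j),
      sum_range_succ, sum_eq_zero fun i hi => by simp [(mem_range.1 hi).ne]]
    simp
  rw [hlim]
  refine tendsto_finsetSum _ fun ij hij => ?_
  have hpow := tendsto_natCast_pow_div_pow (HasAntidiagonal.antidiagonal.fst_le hij)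
  exact (((tendsto_const_nhds.add (tendsto_const_nhds.div_atTop tendsto_natCast_atTop_atTop)).mul
    hpow).const_mul _).mul_const _

section Operators

variable {𝕜 E : Type*} [NontriviallyNormedField 𝕜] [NormedAddCommGroup E] [NormedSpace 𝕜 E]
  {D : E →ₗ.[𝕜] E}

variable (u : ℕ → E →L[𝕜] E) in
noncomputable def wordProd (f : ℕ → ℕ) : ℕ → E →L[𝕜] E
  | 0 => 1
  | t + 1 => wordProd f t * u (f t)

variable {u : ℕ → E →L[𝕜] E}

theorem wordProd_congr {f g : ℕ → ℕ} {t : ℕ} (h : ∀ i < t, f i = g i) :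
    wordProd u f t = wordProd u g t := by
  induction t with
  | zero => rfl
  | succ t ih =>
    rw [wordProd, wordProd, ih fun i hi => h i (by omega), h t t.lt_succ_self]

theorem wordProd_zero (t : ℕ) : wordProd u 0 t = u 0 ^ t := by
  induction t with
  | zero => rfl
  | succ t ih => rw [wordProd, ih, pow_succ, Pi.zero_apply]

theorem mem_graph_wordProd
    (hu : ∀ m x y, (x, y) ∈ D.graph → (u m x, u m y + u (m + 1) x) ∈ D.graph)
    (f : ℕ → ℕ) (t : ℕ) {x y : E} (hxy : (x, y) ∈ D.graph) :
    (wordProd u f t x,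
      wordProd u f t y + ∑ i ∈ range t, wordProd u (f + Pi.single i 1) t x) ∈ D.graph := by
  induction t generalizing x y with
  | zero => simpa [wordProd] using hxy
  | succ t ih =>
    have hlast : wordProd u (f + Pi.single t 1) (t + 1) x = wordProd u f t (u (f t + 1) x) := by
      rw [wordProd, wordProd_congr (g := f) fun i hi => by simp [hi.ne]]
      simp
    have hinit : ∀ i ∈ range t, wordProd u (f + Pi.single i 1) (t + 1) x =
        wordProd u (f + Pi.single i 1) t (u (f t) x) := fun i hi => by
      simp [wordProd, (mem_range.1 hi).ne']
    rw [sum_range_succ, sum_congr rfl hinit, hlast]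
    convert ih (hu (f t) x y hxy) using 2
    · rfl
    · rw [map_add, wordProd, mul_apply_eq_comp]
      abel

theorem norm_wordProd_le (f : ℕ → ℕ) (t : ℕ) :
    ‖wordProd u f t‖ ≤ ∏ i ∈ range t, ‖u (f i)‖ := by
  induction t with
  | zero => exact ContinuousLinearMap.norm_id_le
  | succ t ih =>
    rw [wordProd, prod_range_succ]
    exact (norm_mul_le _ _).trans (by gcongr)

theorem norm_wordProd_le_pow_sum {f : ℕ → ℕ} {t n : ℕ} {B : ℝ} (hf : ∀ i ∈ range t, f i ≤ n)
    (hB : ∀ j ≤ n, ‖u j‖ ≤ B ^ j) :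
    ‖wordProd u f t‖ ≤ B ^ ∑ i ∈ range t, f i := by
  rw [← prod_pow_eq_pow_sum]
  exact (norm_wordProd_le f t).trans
    (prod_le_prod (fun _ _ => norm_nonneg _) fun i hi => hB _ (hf i hi))

variable (u) in
/-- When `u j = ad_Dʲ (u 0)`, this is `ad_Dᵏ (u 0 ^ t)` (see `mem_graph_adPow`). -/
noncomputable def adPow (t k : ℕ) : E →L[𝕜] E := ∑ s : Fin k → Fin t, wordProd u (fiberCard s) t

theorem adPow_zero (t : ℕ) : adPow u t 0 = u 0 ^ t := by
  rw [adPow, Fintype.sum_unique, ← wordProd_zero]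
  congr 1

theorem mem_graph_adPow
    (hu : ∀ m x y, (x, y) ∈ D.graph → (u m x, u m y + u (m + 1) x) ∈ D.graph)
    (t k : ℕ) {x y : E} (hxy : (x, y) ∈ D.graph) :
    (adPow u t k x, adPow u t k y + adPow u t (k + 1) x) ∈ D.graph := by
  have hsucc : adPow u t (k + 1) x =
      ∑ s : Fin k → Fin t, ∑ i ∈ range t, wordProd u (fiberCard s + Pi.single i 1) t x := by
    simp only [adPow, _root_.sum_apply]
    rw [← Fintype.sum_equiv (Fin.consEquiv fun _ => Fin t)
      (fun p => wordProd u (fiberCard (Fin.cons p.1 p.2)) t x) _ fun _ => rfl,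
      Fintype.sum_prod_type, sum_comm]
    refine sum_congr rfl fun s _ => ?_
    rw [← Fin.sum_univ_eq_sum_range]
    simp only [fiberCard_cons]
  have hsum := D.graph.sum_mem (t := (univ : Finset (Fin k → Fin t)))
    fun s _ => mem_graph_wordProd hu (fiberCard s) t hxy
  rw [← prod_mk_sum, sum_add_distrib, ← hsucc] at hsum
  simpa only [adPow, _root_.sum_apply] using hsum

theorem norm_adPow_le (h0 : ‖u 0‖ ≤ 1) {t k : ℕ} {M : ℝ} (hM : ∀ j ≤ k, ‖u j‖ ≤ M ^ j) :
    ‖adPow u t k‖ ≤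
      t.descFactorial k * ‖u 1‖ ^ k + ((t ^ k - t.descFactorial k : ℕ) : ℝ) * M ^ k := by
  have hinj : ∀ s : Fin k → Fin t, Injective s → ‖wordProd u (fiberCard s) t‖ ≤ ‖u 1‖ ^ k := by
    intro s hs
    have := norm_wordProd_le_pow_sum (u := u) (t := t) (B := ‖u 1‖)
      (fun i _ => fiberCard_le_one hs i) fun j hj => by interval_cases j <;> simp [h0]
    rwa [sum_fiberCard] at this
  have hall : ∀ s : Fin k → Fin t, ‖wordProd u (fiberCard s) t‖ ≤ M ^ k := by
    intro s
    have := norm_wordProd_le_pow_sum (u := u) (t := t) (fun i _ => fiberCard_le s i) hM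
    rwa [sum_fiberCard] at this
  have hcard : #{s : Fin k → Fin t | ¬Injective s} = t ^ k - t.descFactorial k := by
    rw [filter_not, card_sdiff_of_subset (filter_subset _ _), card_filter_injective, card_univ,
      Fintype.card_fun, Fintype.card_fin, Fintype.card_fin]
  calc ‖adPow u t k‖ ≤ ∑ s : Fin k → Fin t, ‖wordProd u (fiberCard s) t‖ := norm_sum_le _ _
    _ = ∑ s with Injective s, ‖wordProd u (fiberCard s) t‖ +
          ∑ s with ¬Injective s, ‖wordProd u (fiberCard s) t‖ :=
      (sum_filter_add_sum_filter_not _ _ _).symm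
    _ ≤ ∑ s with Injective s, ‖u 1‖ ^ k + ∑ s with ¬Injective s, M ^ k :=
      add_le_add (sum_le_sum fun s hs => hinj s (mem_filter.1 hs).2) (sum_le_sum fun s _ => hall s)
    _ = _ := by simp only [sum_const, card_filter_injective, hcard, nsmul_eq_mul]

theorem norm_adPow_le_mul_pow (h0 : ‖u 0‖ ≤ 1) {t k : ℕ} (ht : 0 < t) {M : ℝ}
    (hM : ∀ j ≤ k, ‖u j‖ ≤ M ^ j) :
    ‖adPow u t k‖ ≤ (‖u 1‖ ^ k + k ^ 2 * M ^ k / t) * t ^ k := by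
  have hMk : 0 ≤ M ^ k := (norm_nonneg _).trans (hM k le_rfl)
  have hrest : ((t ^ k - t.descFactorial k : ℕ) : ℝ) ≤ k ^ 2 * t ^ k / t := by
    rw [le_div_iff₀ (Nat.cast_pos.2 ht)]
    exact_mod_cast Nat.pow_sub_descFactorial_mul_le t k
  calc ‖adPow u t k‖
      ≤ t.descFactorial k * ‖u 1‖ ^ k + ((t ^ k - t.descFactorial k : ℕ) : ℝ) * M ^ k :=
        norm_adPow_le h0 hM
    _ ≤ t ^ k * ‖u 1‖ ^ k + (k ^ 2 * t ^ k / t) * M ^ k := by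
      gcongr
      exact_mod_cast t.descFactorial_le_pow k
    _ = (‖u 1‖ ^ k + k ^ 2 * M ^ k / t) * t ^ k := by ring

theorem exists_norm_le_pow (h0 : ‖u 0‖ ≤ 1) (m : ℕ) : ∃ M : ℝ, ∀ j ≤ m, ‖u j‖ ≤ M ^ j := by
  refine ⟨1 + ∑ j ∈ range (m + 1), ‖u j‖, fun j hj => ?_⟩
  have hsum : ‖u j‖ ≤ ∑ j ∈ range (m + 1), ‖u j‖ :=
    single_le_sum (fun j _ => norm_nonneg (u j)) (mem_range.2 (Nat.lt_succ_of_le hj))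
  rcases j.eq_zero_or_pos with rfl | hj0
  · simpa using h0
  · exact (le_add_of_nonneg_of_le zero_le_one hsum).trans
      (le_self_pow₀ (le_add_of_le_of_nonneg le_rfl (hsum.trans' (norm_nonneg _))) hj0.ne')

theorem norm_le_sum_antidiagonal_mul_pow
    (hu : ∀ m x y, (x, y) ∈ D.graph → (u m x, u m y + u (m + 1) x) ∈ D.graph)
    (h0 : ‖u 0‖ ≤ 1) {c : ℕ → ℕ → E} (hc : ∀ t m, (c t m, c t (m + 1)) ∈ D.graph)
    (hc0 : ∀ t, c t 0 = (u 0 ^ t) (c 0 0)) {m : ℕ} {M : ℝ} (hM : ∀ j ≤ m, ‖u j‖ ≤ M ^ j)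
    {t : ℕ} (ht : 0 < t) :
    ‖c t m‖ ≤ (∑ ij ∈ antidiagonal m, m.choose ij.1 *
      ((‖u 1‖ ^ ij.1 + ij.1 ^ 2 * M ^ ij.1 / t) * (t ^ ij.1 / t ^ m)) * ‖c 0 ij.2‖) * t ^ m := by
  rw [D.leibniz_of_mem_graph (fun k _ _ => mem_graph_adPow hu t k) (hc 0) (hc t)
    (by rw [hc0, adPow_zero]) m, sum_mul]
  refine (norm_sum_le _ _).trans (sum_le_sum fun ij hij => ?_)
  calc ‖m.choose ij.1 • adPow u t ij.1 (c 0 ij.2)‖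
      ≤ m.choose ij.1 * (‖adPow u t ij.1‖ * ‖c 0 ij.2‖) :=
        norm_nsmul_le.trans (by gcongr; exact (adPow u t ij.1).le_opNorm _)
    _ ≤ m.choose ij.1 * ((‖u 1‖ ^ ij.1 + ij.1 ^ 2 * M ^ ij.1 / t) * t ^ ij.1 * ‖c 0 ij.2‖) := by
        gcongr
        exact norm_adPow_le_mul_pow h0 ht fun j hj =>
          hM j (hj.trans (HasAntidiagonal.antidiagonal.fst_le hij))
    _ = _ := by field_simp

theorem eventually_norm_le_mul_pow
    (hu : ∀ m x y, (x, y) ∈ D.graph → (u m x, u m y + u (m + 1) x) ∈ D.graph)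
    (h0 : ‖u 0‖ ≤ 1) {c : ℕ → ℕ → E} (hc : ∀ t m, (c t m, c t (m + 1)) ∈ D.graph)
    (hc0 : ∀ t, c t 0 = (u 0 ^ t) (c 0 0)) (m : ℕ) {ε : ℝ} (hε : 0 < ε) :
    ∀ᶠ t in atTop, ‖c t m‖ ≤ (‖u 1‖ ^ m * ‖c 0 0‖ + ε) * t ^ m := by
  obtain ⟨M, hM⟩ := exists_norm_le_pow h0 m
  have hlim := tendsto_sum_antidiagonal_choose_mul ‖u 1‖ M (fun j => ‖c 0 j‖) m
  filter_upwards [hlim.eventually (gt_mem_nhds (lt_add_of_pos_right _ hε)),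
    eventually_gt_atTop 0] with t hlt ht
  exact (norm_le_sum_antidiagonal_mul_pow hu h0 hc hc0 hM ht).trans (by gcongr)

end Operators

open Set

theorem pow_mul_measure_le_integral_pow (μ : Measure ℝ) [IsFiniteMeasure μ] {L : ℝ} (hL : 0 ≤ L)
    (m : ℕ) (hint : Integrable (fun v => v ^ (2 * m)) μ) :
    L ^ (2 * m) * (μ (Iic (-L) ∪ Ici L)).toReal ≤ ∫ v, v ^ (2 * m) ∂μ := by
  have hsub : Iic (-L) ∪ Ici L ⊆ {v | L ^ (2 * m) ≤ v ^ (2 * m)} := by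
    intro v hv
    have hLv : L ≤ |v| := by
      rcases hv with hv | hv
      · exact (le_neg.1 hv).trans (neg_le_abs v)
      · exact hv.trans (le_abs_self v)
    simpa only [mem_ofPred_eq, pow_mul, sq_abs] using pow_le_pow_left₀ (pow_nonneg hL 2)
      (pow_le_pow_left₀ hL hLv 2) m
  calc L ^ (2 * m) * (μ (Iic (-L) ∪ Ici L)).toReal
      ≤ L ^ (2 * m) * (μ {v | L ^ (2 * m) ≤ v ^ (2 * m)}).toReal := by
        gcongr
        exact measure_ne_top _ _
    _ ≤ ∫ v, v ^ (2 * m) ∂μ :=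
      mul_meas_ge_le_integral_of_nonneg (ae_of_all _ fun v => (even_two_mul m).pow_nonneg v) hint _

theorem tendsto_measure_Iic_union_Ici_of_moment_le {ι : Type*} {l : Filter ι}
    {p : ι → Measure ℝ} [∀ i, IsFiniteMeasure (p i)]
    (hint : ∀ i m, Integrable (fun v => v ^ (2 * m)) (p i)) {a L : ℝ} (ha : 0 ≤ a) (hL : a < L)
    (hmom : ∀ m ε, 0 < ε → ∀ᶠ i in l, ∫ v, v ^ (2 * m) ∂p i ≤ a ^ (2 * m) + ε) :
    Tendsto (fun i => p i (Iic (-L) ∪ Ici L)) l (nhds 0) := by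
  have hL0 : 0 < L := ha.trans_lt hL
  rw [← ENNReal.tendsto_toReal_iff (fun i => measure_ne_top _ _) ENNReal.zero_ne_top,
    ENNReal.toReal_zero]
  refine tendsto_order.2
    ⟨fun b hb => Eventually.of_forall fun i => hb.trans_le ENNReal.toReal_nonneg, fun δ hδ => ?_⟩
  obtain ⟨m, hm⟩ : ∃ m : ℕ, ((a / L) ^ 2) ^ m < δ / 2 :=
    exists_pow_lt_of_lt_one (half_pos hδ) (by
      rw [sq_lt_one_iff₀ (div_nonneg ha hL0.le)]; exact (div_lt_one hL0).2 hL)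
  have hLm : 0 < L ^ (2 * m) := pow_pos hL0 _
  have ham : a ^ (2 * m) < δ / 2 * L ^ (2 * m) := by
    rwa [← pow_mul, div_pow, div_lt_iff₀ hLm] at hm
  filter_upwards [hmom m (δ / 2 * L ^ (2 * m)) (by positivity)] with i hi
  have := pow_mul_measure_le_integral_pow (p i) hL0.le m (hint i m)
  nlinarith

theorem MeasureTheory.ProbabilityMeasure.measure_compl_Icc_eq_zero_of_tendsto {ι : Type*}
    {l : Filter ι} [l.NeBot] {P : ι → ProbabilityMeasure ℝ} {Q : ProbabilityMeasure ℝ}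
    (hPQ : Tendsto P l (nhds Q)) {a : ℝ}
    (h : ∀ L, a < L → Tendsto (fun i => (P i : Measure ℝ) (Iic (-L) ∪ Ici L)) l (nhds 0)) :
    (Q : Measure ℝ) (Icc (-a) a)ᶜ = 0 := by
  have hL : ∀ L, a < L → Icc (-L) L ∈ ae (Q : Measure ℝ) := by
    intro L hL
    have hsub : (Icc (-L) L)ᶜ ⊆ Iic (-L) ∪ Ici L := fun v hv => by
      rcases not_and_or.1 hv with hv | hv
      exacts [Or.inl (not_le.1 hv).le, Or.inr (not_le.1 hv).le]
    have hlim := tendsto_of_tendsto_of_tendsto_of_le_of_le tendsto_const_nhds (h L hL)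
      (fun _ => bot_le) fun _ => measure_mono hsub
    exact mem_ae_iff.2 (le_antisymm ((ProbabilityMeasure.le_liminf_measure_open_of_tendsto hPQ
      isClosed_Icc.isOpen_compl).trans hlim.liminf_eq.le) bot_le)
  have hseq : Tendsto (fun n : ℕ => a + 1 / ((n : ℝ) + 1)) atTop (nhds a) := by
    simpa only [add_zero] using
      (tendsto_const_nhds (x := a)).add tendsto_one_div_add_atTop_nhds_zero_nat
  have hae : ∀ᵐ v ∂(Q : Measure ℝ), ∀ n : ℕ, v ∈ Icc (-(a + 1 / ((n : ℝ) + 1))) (a + 1 / (n + 1)) :=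
    ae_all_iff.2 fun n => hL _ (lt_add_of_pos_right a (by positivity))
  rw [← mem_ae_iff]
  filter_upwards [hae] with v hv
  exact abs_le.1 (ge_of_tendsto' hseq fun n => abs_le.2 (hv n))

theorem re_inner_inv_smul_le_div {H : Type*} [NormedAddCommGroup H] [InnerProductSpace ℂ H]
    (x : H) {w : H} (hw : ‖w‖ = 1) {r : ℝ} (hr : 0 < r) :
    (⟪(r⁻¹ : ℝ) • x, w⟫_ℂ).re ≤ ‖x‖ / r := by
  calc (⟪(r⁻¹ : ℝ) • x, w⟫_ℂ).re ≤ ‖(r⁻¹ : ℝ) • x‖ * ‖w‖ :=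
        (Complex.re_le_norm _).trans (norm_inner_le_norm _ _)
    _ = ‖x‖ / r := by rw [hw, mul_one, norm_smul, Real.norm_of_nonneg (inv_nonneg.2 hr.le),
        inv_mul_eq_div]

theorem rescaled_distribution_escapes_compl_of_commutator_ball_general
    {H : Type*} [NormedAddCommGroup H] [InnerProductSpace ℂ H] [CompleteSpace H]
    (D : H →ₗ.[ℂ] H)
    (U : H →L[ℂ] H) (hU : U ∈ unitary (H →L[ℂ] H))
    (u : ℕ → (H →L[ℂ] H)) (hu0 : u 0 = U)
    (hu : ∀ (m : ℕ) (ξ : D.domain), ∃ h : u m (ξ : H) ∈ D.domain,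
      u (m + 1) (ξ : H) = D ⟨u m (ξ : H), h⟩ - u m (D ξ))
    (ξ : H) (hξ : ‖ξ‖ = 1)
    (c : ℕ → ℕ → H)
    (hc0 : ∀ t : ℕ, c t 0 = (U ^ t) ξ)
    (hc : ∀ t m : ℕ, ∃ h : c t m ∈ D.domain, c t (m + 1) = D ⟨c t m, h⟩)
    (p : ℕ → Measure ℝ)
    (hp : ∀ t, IsProbabilityMeasure (p t))
    (hpint : ∀ t m : ℕ, Integrable (fun v : ℝ => v ^ m) (p t))
    (hmom : ∀ t m : ℕ, 0 < t → ∫ v, v ^ m ∂(p t) =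
      (⟪(((t : ℝ) ^ m)⁻¹ : ℝ) • c t m, (U ^ t) ξ⟫_ℂ).re) :
    (∀ L : ℝ, ‖u 1‖ < L →
      Tendsto (fun t : ℕ => p t (Set.Iic (-L) ∪ Set.Ici L)) atTop (nhds 0)) ∧
    (∀ q : Measure ℝ, IsProbabilityMeasure q →
      (∀ f : BoundedContinuousFunction ℝ ℝ,
        Tendsto (fun t : ℕ => ∫ v, f v ∂(p t)) atTop (nhds (∫ v, f v ∂q))) →
      q (Set.Icc (-‖u 1‖) ‖u 1‖)ᶜ = 0) := by
  have hcomm : ∀ m x y, (x, y) ∈ D.graph → (u m x, u m y + u (m + 1) x) ∈ D.graph :=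
    fun m _ _ => D.mem_graph_of_commutator (hu m)
  have hgraph : ∀ t m, (c t m, c t (m + 1)) ∈ D.graph := fun t m =>
    let ⟨h, he⟩ := hc t m
    D.mem_graph_iff.2 ⟨⟨_, h⟩, rfl, he.symm⟩
  have h0 : ‖u 0‖ ≤ 1 := hu0 ▸ ContinuousLinearMap.opNorm_le_bound _ zero_le_one fun x => by
    rw [ContinuousLinearMap.norm_map_of_mem_unitary hU, one_mul]
  have hc00 : ‖c 0 0‖ = 1 := by rw [hc0, pow_zero, one_apply_eq_self, hξ]
  have hmoment : ∀ m ε, 0 < ε → ∀ᶠ t in atTop, ∫ v, v ^ (2 * m) ∂p t ≤ ‖u 1‖ ^ (2 * m) + ε := by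
    intro m ε hε
    filter_upwards [eventually_norm_le_mul_pow hcomm h0 hgraph (by simp [hc0, hu0]) (2 * m) hε,
      eventually_gt_atTop 0] with t ht ht0
    have htm : (0 : ℝ) < (t : ℝ) ^ (2 * m) := by positivity
    rw [hc00, mul_one, ← div_le_iff₀ htm] at ht
    rw [hmom t _ ht0]
    refine (re_inner_inv_smul_le_div _ ?_ htm).trans ht
    rw [ContinuousLinearMap.norm_map_of_mem_unitary (pow_mem hU t), hξ]
  have hescape : ∀ L : ℝ, ‖u 1‖ < L →
      Tendsto (fun t : ℕ => p t (Set.Iic (-L) ∪ Set.Ici L)) atTop (nhds 0) := fun L hL =>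
    tendsto_measure_Iic_union_Ici_of_moment_le (fun t m => hpint t (2 * m)) (norm_nonneg _) hL
      hmoment
  exact ⟨hescape, fun q hq hconv => ProbabilityMeasure.measure_compl_Icc_eq_zero_of_tendsto
    (P := fun t => ⟨p t, hp t⟩) (Q := ⟨q, hq⟩)
    (ProbabilityMeasure.tendsto_iff_forall_integral_tendsto.2 hconv) hescape⟩

/-- For a smooth discrete-time quantum walk `(H, (Uᵗ), D)` and a smooth unit
vector `ξ`, with `p t` the rescaled position distribution at time `t`, for every real
`L > ‖[D,U]‖` one has `p_t((-∞,-L] ∪ [L,∞)) → 0`.  Consequently, if `p_t` converges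
weakly to a probability measure `q`, then `q` is supported in
`[-‖[D,U]‖, ‖[D,U]‖]` (in particular its support is compact).  Here `u 1 = [D,U]` is the
bounded commutator coming from smoothness. -/
theorem rescaled_distribution_escapes_compl_of_commutator_ball
    {H : Type*} [NormedAddCommGroup H] [InnerProductSpace ℂ H] [CompleteSpace H]
    (D : H →ₗ.[ℂ] H) (hD : IsSelfAdjoint D)
    (U : H →L[ℂ] H) (hU : U ∈ unitary (H →L[ℂ] H))
    (u : ℕ → (H →L[ℂ] H)) (hu0 : u 0 = U)
    (hu : ∀ (m : ℕ) (ξ : D.domain), ∃ h : u m (ξ : H) ∈ D.domain,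
      u (m + 1) (ξ : H) = D ⟨u m (ξ : H), h⟩ - u m (D ξ))
    (ξ : H) (hξ : ‖ξ‖ = 1)
    (c : ℕ → ℕ → H)
    (hc0 : ∀ t : ℕ, c t 0 = (U ^ t) ξ)
    (hc : ∀ t m : ℕ, ∃ h : c t m ∈ D.domain, c t (m + 1) = D ⟨c t m, h⟩)
    (p : ℕ → Measure ℝ)
    (hp : ∀ t, IsProbabilityMeasure (p t))
    (hpint : ∀ t m : ℕ, Integrable (fun v : ℝ => v ^ m) (p t))
    (hmom : ∀ t m : ℕ, 0 < t → ∫ v, v ^ m ∂(p t) =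
      (⟪(((t : ℝ) ^ m)⁻¹ : ℝ) • c t m, (U ^ t) ξ⟫_ℂ).re) :
    (∀ L : ℝ, ‖u 1‖ < L →
      Tendsto (fun t : ℕ => p t (Set.Iic (-L) ∪ Set.Ici L)) atTop (nhds 0)) ∧
    (∀ q : Measure ℝ, IsProbabilityMeasure q →
      (∀ f : BoundedContinuousFunction ℝ ℝ,
        Tendsto (fun t : ℕ => ∫ v, f v ∂(p t)) atTop (nhds (∫ v, f v ∂q))) →
      q (Set.Icc (-‖u 1‖) ‖u 1‖)ᶜ = 0) :=
  rescaled_distribution_escapes_compl_of_commutator_ball_general D U hU u hu0 hu ξ hξ c hc0 hc p hp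
    hpint hmom
end

section
/- Let ν be a natural number, r > 0, and λ : T_{2π/r} → 𝕋 a continuous map. There exists a one-parameter group (U^{(t)})_{t∈ℝ} of unitary elements of C(T_{2π/r}) ⊗ M_ν(ℂ) with U^{(1)} = M[λ] ⊗ id_ν if and only if the winding number of λ is zero. -/
/-!
A continuous unit-modulus function on `ℝ` lifts through the covering map `Circle.exp`, and two
lifts differ by a constant in `2πℤ`; hence a periodic one has a unique winding number, and the
winding number of `γ ^ n` is `n` times that of `γ`. If `U` is a one-parameter group with
`U 1 = λ • 1`, then `det U(1/n)` is a continuous periodic `n`-th root of `λ ^ ν`, so `n` divides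
`ν · w(λ)` for every `n ≥ 1`, which forces `w(λ) = 0`. Conversely, a periodic lift `h` of `λ`
gives the scalar one-parameter group `t ↦ exp(i t h) • 1`.
-/

open scoped Matrix

/-- A continuous function `γ : ℝ → ℂ`, viewed as a unit-circle-valued map on the torus
`ℝ/(ℓℤ)`, has winding number `w` if it has a continuous logarithmic lift `h` with
`h(k + ℓ) = h(k) + 2πw`. -/
def HasWindingNumber (ℓ : ℝ) (γ : ℝ → ℂ) (w : ℤ) : Prop :=
  ∃ h : ℝ → ℝ, Continuous h ∧ (∀ k, γ k = Complex.exp (Complex.I * h k)) ∧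
    ∀ k, h (k + ℓ) = h k + 2 * Real.pi * w

open Complex Function Real

theorem exp_I_mul_ofReal_eq_circleExp (x : ℝ) : exp (I * x) = Circle.exp x := by
  rw [Circle.coe_exp, mul_comm]

theorem sub_mem_zmultiples_of_exp_I_mul_eq {x y : ℝ} (h : exp (I * x) = exp (I * y)) :
    x - y ∈ AddSubgroup.zmultiples (2 * π) := by
  rw [exp_I_mul_ofReal_eq_circleExp, exp_I_mul_ofReal_eq_circleExp, Circle.coe_inj,
    Circle.exp_eq_exp] at h
  obtain ⟨m, rfl⟩ := h
  exact ⟨m, by simp⟩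

theorem exists_continuous_lift_of_norm_eq_one {X : Type*} [TopologicalSpace X]
    [SimplyConnectedSpace X] [LocallyPathConnectedSpace X] {γ : X → ℂ} (hc : Continuous γ)
    (hm : ∀ x, ‖γ x‖ = 1) :
    ∃ h : X → ℝ, Continuous h ∧ ∀ x, γ x = exp (I * h x) := by
  let γ' : C(X, Circle) := ⟨fun x ↦ ⟨γ x, by simp [Submonoid.unitSphere, hm]⟩, by fun_prop⟩
  obtain ⟨a₀⟩ : Nonempty X := inferInstance
  obtain ⟨h, ⟨-, hlift⟩, -⟩ :=
    Circle.isCoveringMap_exp.existsUnique_continuousMap_lifts γ' a₀ _ (Circle.exp_arg (γ' a₀))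
  exact ⟨h, h.continuous, fun x ↦ by
    rw [exp_I_mul_ofReal_eq_circleExp]; exact congrArg ((↑) : Circle → ℂ) (congrFun hlift x).symm⟩

theorem sub_eq_sub_of_exp_I_mul_eq {X : Type*} [TopologicalSpace X] [PreconnectedSpace X]
    {f g : X → ℝ} (hf : Continuous f) (hg : Continuous g)
    (hfg : ∀ x, exp (I * f x) = exp (I * g x)) (x y : X) : f x - g x = f y - g y := by
  let d : X → AddSubgroup.zmultiples (2 * π) :=
    fun x ↦ ⟨f x - g x, sub_mem_zmultiples_of_exp_I_mul_eq (hfg x)⟩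
  exact congrArg Subtype.val (PreconnectedSpace.constant inferInstance (f := d) (by fun_prop))

theorem exists_hasWindingNumber {ℓ : ℝ} {γ : ℝ → ℂ} (hc : Continuous γ) (hm : ∀ k, ‖γ k‖ = 1)
    (hp : Periodic γ ℓ) : ∃ w, HasWindingNumber ℓ γ w := by
  obtain ⟨h, hhc, hγ⟩ := exists_continuous_lift_of_norm_eq_one hc hm
  have hlift : ∀ k, exp (I * h (k + ℓ)) = exp (I * h k) := fun k ↦ by rw [← hγ, ← hγ, hp]
  obtain ⟨w, hw⟩ := AddSubgroup.mem_zmultiples_iff.mp (sub_mem_zmultiples_of_exp_I_mul_eq (hlift 0))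
  refine ⟨w, h, hhc, hγ, fun k ↦ ?_⟩
  have hconst := sub_eq_sub_of_exp_I_mul_eq (hhc.comp (continuous_add_const ℓ)) hhc hlift k 0
  rw [comp_apply, comp_apply, ← hw, zsmul_eq_mul] at hconst
  linarith

namespace HasWindingNumber

variable {ℓ : ℝ} {γ : ℝ → ℂ} {w : ℤ}

theorem unique {w' : ℤ} (hw : HasWindingNumber ℓ γ w) (hw' : HasWindingNumber ℓ γ w') :
    w = w' := by
  obtain ⟨h, hc, hγ, hh⟩ := hw
  obtain ⟨h', hc', hγ', hh'⟩ := hw'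
  have hconst := sub_eq_sub_of_exp_I_mul_eq hc hc' (fun k ↦ by rw [← hγ, ← hγ']) (0 + ℓ) 0
  rw [hh, hh'] at hconst
  exact_mod_cast mul_left_cancel₀ two_pi_pos.ne' (by linarith : 2 * π * (w : ℝ) = 2 * π * w')

theorem pow (hw : HasWindingNumber ℓ γ w) (n : ℕ) : HasWindingNumber ℓ (γ ^ n) (n * w) := by
  obtain ⟨h, hc, hγ, hh⟩ := hw
  refine ⟨fun k ↦ n * h k, continuous_const.mul hc, fun k ↦ ?_, fun k ↦ ?_⟩
  · simp only [Pi.pow_apply, hγ, ← Complex.exp_nat_mul]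
    congr 1; push_cast; ring
  · simp only [hh]; push_cast; ring

theorem eq_zero_of_forall_exists_pow_eq (hw : HasWindingNumber ℓ γ w)
    (hroot : ∀ n : ℕ, 0 < n → ∃ δ : ℝ → ℂ, Continuous δ ∧ (∀ k, ‖δ k‖ = 1) ∧ Periodic δ ℓ ∧
      δ ^ n = γ) : w = 0 := by
  obtain ⟨δ, hc, hm, hp, hδ⟩ := hroot (w.natAbs + 1) w.natAbs.succ_pos
  obtain ⟨m, hm⟩ := exists_hasWindingNumber hc hm hp
  have hdvd : ((w.natAbs + 1 : ℕ) : ℤ) ∣ w := ⟨m, ((hδ ▸ hm.pow _).unique hw).symm⟩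
  exact Int.eq_zero_of_abs_lt_dvd hdvd (by rw [Int.abs_eq_natAbs]; omega)

end HasWindingNumber

theorem pow_eq_apply_natCast_mul {M : Type*} [Monoid M] {V : ℝ → M}
    (hV : ∀ s t, V (s + t) = V s * V t) (t : ℝ) {n : ℕ} (hn : 0 < n) : V t ^ n = V (n * t) := by
  induction n, hn using Nat.le_induction with
  | base => simp
  | succ n _ ih => rw [pow_succ, ih, ← hV]; congr 1; push_cast; ring

theorem smul_one_mem_unitary {n : Type*} [Fintype n] [DecidableEq n] {z : ℂ} (hz : ‖z‖ = 1) :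
    z • (1 : Matrix n n ℂ) ∈ unitary (Matrix n n ℂ) := by
  refine Unitary.smul_mem_of_mem ?_ (one_mem _)
  rw [Unitary.mem_iff, RCLike.star_def, Complex.conj_mul', Complex.mul_conj', hz]
  simp

theorem one_parameter_group_iff_winding_number_zero_general
    (ν : ℕ) (hν : 0 < ν) (r : ℝ)
    (lam : ℝ → ℂ) (hlc : Continuous lam) (hlmod : ∀ k, ‖lam k‖ = 1)
    (hlper : Function.Periodic lam (2 * Real.pi / r)) :
    (∃ U : ℝ → ℝ → Matrix (Fin ν) (Fin ν) ℂ,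
        (∀ t : ℝ, Continuous (U t)) ∧
        (∀ t : ℝ, Function.Periodic (U t) (2 * Real.pi / r)) ∧
        (∀ s t : ℝ, ∀ k : ℝ, U (s + t) k = U s k * U t k) ∧
        (∀ t k : ℝ, U t k * (U t k)ᴴ = 1 ∧ (U t k)ᴴ * U t k = 1) ∧
        (∀ k : ℝ, U 1 k = lam k • 1))
      ↔ HasWindingNumber (2 * Real.pi / r) lam 0 := by
  constructor
  · rintro ⟨U, hUc, hUper, hUadd, hUunit, hU1⟩
    obtain ⟨w, hw⟩ := exists_hasWindingNumber hlc hlmod hlper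
    have hroot : ∀ n : ℕ, 0 < n → ∃ δ : ℝ → ℂ, Continuous δ ∧ (∀ k, ‖δ k‖ = 1) ∧
        Periodic δ (2 * π / r) ∧ δ ^ n = lam ^ ν := by
      intro n hn
      refine ⟨fun k ↦ (U (1 / n) k).det, (hUc _).matrix_det, fun k ↦ ?_,
        fun k ↦ congrArg Matrix.det (hUper _ k), funext fun k ↦ ?_⟩
      · exact CStarRing.norm_of_mem_unitary
          (Matrix.det_of_mem_unitary (Unitary.mem_iff.mpr (hUunit _ k).symm))
      · have hpow := pow_eq_apply_natCast_mul (V := (U · k)) (fun s t ↦ hUadd s t k) (1 / n) hn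
        rw [mul_one_div_cancel (by positivity)] at hpow
        simp only [Pi.pow_apply, ← Matrix.det_pow, hpow, hU1, Matrix.det_smul, Matrix.det_one,
          mul_one, Fintype.card_fin]
    have hνw := (hw.pow ν).eq_zero_of_forall_exists_pow_eq hroot
    obtain rfl : w = 0 := by simpa [hν.ne'] using hνw
    exact hw
  · rintro ⟨h, hc, hlam, hh⟩
    refine ⟨fun t k ↦ exp (I * ↑(t * h k)) • 1, fun t ↦ by fun_prop, fun t k ↦ ?_,
      fun s t k ↦ ?_, fun t k ↦ ?_, fun k ↦ ?_⟩
    · simp [hh]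
    · beta_reduce
      rw [smul_mul_smul, one_mul, ← Complex.exp_add, ← mul_add, ← ofReal_add, add_mul]
    · exact (Unitary.mem_iff.mp (smul_one_mem_unitary (norm_exp_I_mul_ofReal _))).symm
    · simp only [hlam, one_mul]

/-- For `ν ≥ 1`, `r > 0` and a continuous map `λ : T_{2π/r} → 𝕋`
(encoded as a `(2π/r)`-periodic continuous unit-modulus function on `ℝ`), there exists a
one-parameter group `(U^{(t)})_{t∈ℝ}` of unitary elements of `C(T_{2π/r}) ⊗ M_ν(ℂ)`
(encoded as periodic continuous `Matrix (Fin ν) (Fin ν) ℂ`-valued functions, pointwise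
unitary) with `U^{(1)} = M[λ] ⊗ id_ν`, if and only if the winding number of `λ` is
zero. -/
theorem one_parameter_group_iff_winding_number_zero
    (ν : ℕ) (hν : 0 < ν) (r : ℝ) (hr : 0 < r)
    (lam : ℝ → ℂ) (hlc : Continuous lam) (hlmod : ∀ k, ‖lam k‖ = 1)
    (hlper : Function.Periodic lam (2 * Real.pi / r)) :
    (∃ U : ℝ → ℝ → Matrix (Fin ν) (Fin ν) ℂ,
        (∀ t : ℝ, Continuous (U t)) ∧
        (∀ t : ℝ, Function.Periodic (U t) (2 * Real.pi / r)) ∧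
        (∀ s t : ℝ, ∀ k : ℝ, U (s + t) k = U s k * U t k) ∧
        (∀ t k : ℝ, U t k * (U t k)ᴴ = 1 ∧ (U t k)ᴴ * U t k = 1) ∧
        (∀ k : ℝ, U 1 k = lam k • 1))
      ↔ HasWindingNumber (2 * Real.pi / r) lam 0 :=
  one_parameter_group_iff_winding_number_zero_general ν hν r lam hlc hlmod hlper
end
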